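/- arXiv:1601.01395 — 5 statements merged into one kernel-verified Lean document; each statement's English description precedes it below -/
import Mathlib

section
/- In a commutative unital von Neumann regular ring, if ab = 0 then i(a + b) = i(a) + i(b) and s(a + b) = s(a) + s(b). -/
namespace LCRA

/-- `A` is a (commutative, unital) von Neumann regular ring. -/
def IsRegularRing (A : Type*) [CommRing A] : Prop :=
  ∀ a : A, ∃ b, a * a * b = a

/-- `m` is the supremum of the set `L` of idempotents with respect to the
order `e ≤ f ↔ e * f = e`. -/
def IsIdemSup {A : Type*} [CommRing A] (m : A) (L : Set A) : Prop :=
  IsIdempotentElem m ∧ (∀ e ∈ L, e * m = e) ∧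
    ∀ g : A, IsIdempotentElem g → (∀ e ∈ L, e * g = e) → m * g = m

/-- The Boolean algebra of idempotents of `A` is complete. -/
def IdemComplete (A : Type*) [CommRing A] : Prop :=
  ∀ L : Set A, (∀ e ∈ L, IsIdempotentElem e) → ∃ m, IsIdemSup m L

/-- A partition of unity: pairwise disjoint idempotents with supremum `1`. -/
def IsPartitionOfUnity {A : Type*} [CommRing A] {ι : Type*} (e : ι → A) : Prop :=
  (∀ i, IsIdempotentElem (e i)) ∧ (∀ i j, i ≠ j → e i * e j = 0) ∧
    IsIdemSup (1 : A) (Set.range e)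

/-- `A` is laterally complete: its Boolean algebra of idempotents is complete and
every pairwise disjoint family `{a i}` admits `b` with `b * s(a i) = a i`, where the
support `s(a i)` is `a i * c` for any quasi-inverse `c` of `a i`. -/
def RingLaterallyComplete (A : Type*) [CommRing A] : Prop :=
  IdemComplete A ∧
    ∀ (ι : Type) (a : ι → A), (∀ i j, i ≠ j → a i * a j = 0) →
      ∃ b : A, ∀ i, ∀ c : A, a i * a i * c = a i → b * (a i * c) = a i

/-- A regular `A`-module: if `e • x = 0` for all `e` in a set `L` of idempotents,
then `(sup L) • x = 0`. -/
def IsRegularModule (A X : Type*) [CommRing A] [AddCommGroup X] [Module A X] : Prop :=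
  ∀ (x : X) (L : Set A) (m : A), (∀ e ∈ L, IsIdempotentElem e) →
    IsIdemSup m L → (∀ e ∈ L, e • x = 0) → m • x = 0

/-- A laterally complete `A`-module: every family can be mixed along any partition of unity. -/
def ModuleLaterallyComplete (A X : Type*) [CommRing A] [AddCommGroup X] [Module A X] : Prop :=
  ∀ (ι : Type) (e : ι → A) (y : ι → X), IsPartitionOfUnity e →
    ∃ x : X, ∀ i, e i • x = e i • y i

/-- The cyclic hull `mix(E)` of a subset `E` of an `A`-module `X`. -/
def mixSet (A : Type*) {X : Type*} [CommRing A] [AddCommGroup X] [Module A X]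
    (E : Set X) : Set X :=
  {x | ∃ (ι : Type) (e : ι → A) (y : ι → X),
    IsPartitionOfUnity e ∧ (∀ i, y i ∈ E) ∧ ∀ i, e i • x = e i • y i}

/-- The set `K(∇)` of step elements: finite `K`-linear combinations of idempotents. -/
def StepSet (K A : Type*) [CommSemiring K] [CommRing A] [Algebra K A] : Set A :=
  {x | ∃ (n : ℕ) (l : Fin n → K) (e : Fin n → A),
    (∀ k, IsIdempotentElem (e k)) ∧ x = ∑ k, l k • e k}

end LCRA

namespace LCRA

/-- Uniqueness of the generalized inverse. -/
theorem gi_unique {A : Type*} [CommRing A] (a x y : A)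
    (hx1 : a * a * x = a) (hx2 : a * x * x = x)
    (hy1 : a * a * y = a) (hy2 : a * y * y = y) : x = y := by
  have hef : a * x = a * y := by
    have h1 : a * x = (a * y) * (a * x) := by linear_combination (-x) * hy1
    have h2 : a * y = (a * x) * (a * y) := by linear_combination (-y) * hx1
    linear_combination h1 - h2
  calc x = a * x * x := hx2.symm
    _ = a * y * x := by rw [hef]
    _ = a * x * y := by ring
    _ = a * y * y := by rw [hef]
    _ = y := hy2

/-- If `a * b = 0` then `i(a + b) = i(a) + i(b)` and `s(a + b) = s(a) + s(b)`. -/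
theorem stmt_5 {A : Type*} [CommRing A] (hreg : IsRegularRing A)
    (i : A → A) (hi : ∀ a : A, a * a * i a = a ∧ a * i a * i a = i a)
    (a b : A) (hab : a * b = 0) :
    i (a + b) = i a + i b ∧ (a + b) * i (a + b) = a * i a + b * i b := by
  obtain ⟨ha1, ha2⟩ := hi a
  obtain ⟨hb1, hb2⟩ := hi b
  obtain ⟨hs1, hs2⟩ := hi (a + b)
  have had : a * i b = 0 := by
    calc a * i b = a * (b * i b * i b) := by rw [hb2]
      _ = (a * b) * (i b * i b) := by ring
      _ = 0 := by rw [hab]; ring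
  have hbc : b * i a = 0 := by
    calc b * i a = b * (a * i a * i a) := by rw [ha2]
      _ = (a * b) * (i a * i a) := by ring
      _ = 0 := by rw [hab]; ring
  have key : i (a + b) = i a + i b := by
    apply gi_unique (a + b) _ _ hs1 hs2
    · linear_combination ha1 + hb1 + a * had + b * hbc + (2 * (i a + i b)) * hab
    · linear_combination ha2 + hb2 + (i b + 2 * i a) * had + (i a + 2 * i b) * hbc
  refine ⟨key, ?_⟩
  rw [key]
  linear_combination had + hbc

end LCRA
end

section
/- Let A be a commutative unital von Neumann regular algebra over a field K with Boolean algebra of idempotents ∇. The set K(∇) of step elements, i.e. finite K-linear combinations of idempotents, is a von Neumann regular subalgebra of A whose idempotents are exactly ∇. -/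
namespace LCRA

lemma idem_mul {A : Type*} [CommRing A] {x y : A} (hx : IsIdempotentElem x)
    (hy : IsIdempotentElem y) : IsIdempotentElem (x * y) := by
  show x * y * (x * y) = x * y
  calc x * y * (x * y) = x * x * (y * y) := by ring
    _ = x * y := by rw [hx, hy]

lemma smul_mul_smul' {K A : Type*} [Field K] [CommRing A] [Algebra K A]
    (c d : K) (x y : A) : (c • x) * (d • y) = (c * d) • (x * y) := by
  rw [smul_mul_assoc, mul_smul_comm, smul_smul]

/-- Every step element admits a representation with pairwise orthogonal idempotents. -/
lemma orth_rep {K A : Type*} [Field K] [CommRing A] [Algebra K A] :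
    ∀ (n : ℕ) (l : Fin n → K) (e : Fin n → A), (∀ k, IsIdempotentElem (e k)) →
    ∃ (ι : Type) (_ : Fintype ι) (μ : ι → K) (f : ι → A),
      (∀ i, IsIdempotentElem (f i)) ∧ (∀ i j, i ≠ j → f i * f j = 0) ∧
      ∑ k, l k • e k = ∑ i, μ i • f i := by
  intro n
  induction n with
  | zero =>
    intro l e _
    exact ⟨PEmpty, inferInstance, PEmpty.elim, PEmpty.elim, fun i => i.elim,
      fun i => i.elim, by simp⟩
  | succ n ih =>
    intro l e he
    obtain ⟨ι, hft, μ, f, hfid, hforth, hsum⟩ :=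
      ih (fun k => l k.castSucc) (fun k => e k.castSucc) (fun k => he _)
    letI := hft
    set E := e (Fin.last n) with hE
    have hEid : IsIdempotentElem E := he _
    set lam := l (Fin.last n) with hlam
    have hE1 : E * (1 - E) = 0 := by rw [mul_sub, mul_one, hEid, sub_self]
    have hfS : ∀ i, f i * (1 - ∑ j, f j) = 0 := by
      intro i
      have h1 : f i * ∑ j, f j = f i := by
        rw [Finset.mul_sum, Finset.sum_eq_single i (fun j _ hj => hforth i j hj.symm)
          (by simp), hfid i]
      rw [mul_sub, mul_one, h1, sub_self]
    refine ⟨(ι ⊕ ι) ⊕ Unit, inferInstance,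
      Sum.elim (Sum.elim (fun i => μ i + lam) μ) (fun _ => lam),
      Sum.elim (Sum.elim (fun i => f i * E) (fun i => f i * (1 - E)))
        (fun _ => E * (1 - ∑ i, f i)), ?_, ?_, ?_⟩
    · rintro ((i | i) | u)
      · exact idem_mul (hfid i) hEid
      · exact idem_mul (hfid i) hEid.one_sub
      · have hS : IsIdempotentElem (∑ i, f i) := by
          show (∑ i, f i) * (∑ i, f i) = ∑ i, f i
          rw [Finset.sum_mul_sum]
          calc ∑ i, ∑ j, f i * f j = ∑ i, f i * f i :=
                Finset.sum_congr rfl (fun i _ => Finset.sum_eq_single i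
                  (fun j _ hj => hforth i j hj.symm) (by simp))
            _ = ∑ i, f i := Finset.sum_congr rfl fun i _ => hfid i
        exact idem_mul hEid hS.one_sub
    · rintro ((i | i) | u) ((j | j) | v) hne <;>
        simp only [Sum.elim_inl, Sum.elim_inr]
      · have hij : i ≠ j := fun h => hne (by rw [h])
        calc f i * E * (f j * E) = (f i * f j) * (E * E) := by ring
          _ = 0 := by rw [hforth i j hij, zero_mul]
      · by_cases hij : i = j
        · subst hij
          calc f i * E * (f i * (1 - E)) = (f i * f i) * (E * (1 - E)) := by ring
            _ = 0 := by rw [hE1, mul_zero]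
        · calc f i * E * (f j * (1 - E)) = (f i * f j) * (E * (1 - E)) := by ring
            _ = 0 := by rw [hforth i j hij, zero_mul]
      · calc f i * E * (E * (1 - ∑ k, f k)) = (f i * (1 - ∑ k, f k)) * (E * E) := by ring
          _ = 0 := by rw [hfS i, zero_mul]
      · by_cases hij : i = j
        · subst hij
          calc f i * (1 - E) * (f i * E) = (f i * f i) * (E * (1 - E)) := by ring
            _ = 0 := by rw [hE1, mul_zero]
        · calc f i * (1 - E) * (f j * E) = (f i * f j) * ((1 - E) * E) := by ring
            _ = 0 := by rw [hforth i j hij, zero_mul]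
      · have hij : i ≠ j := fun h => hne (by rw [h])
        calc f i * (1 - E) * (f j * (1 - E)) = (f i * f j) * ((1 - E) * (1 - E)) := by ring
          _ = 0 := by rw [hforth i j hij, zero_mul]
      · calc f i * (1 - E) * (E * (1 - ∑ k, f k))
            = (f i * (1 - ∑ k, f k)) * ((1 - E) * E) := by ring
          _ = 0 := by rw [hfS i, zero_mul]
      · calc E * (1 - ∑ k, f k) * (f j * E) = (f j * (1 - ∑ k, f k)) * (E * E) := by ring
          _ = 0 := by rw [hfS j, zero_mul]
      · calc E * (1 - ∑ k, f k) * (f j * (1 - E))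
            = (f j * (1 - ∑ k, f k)) * (E * (1 - E)) := by ring
          _ = 0 := by rw [hE1, mul_zero]
      · exact absurd (by cases u; cases v; rfl) hne
    · rw [Fin.sum_univ_castSucc, hsum, Fintype.sum_sum_type, Fintype.sum_sum_type]
      have hc : E * ∑ i, f i = (∑ i, f i) * E := mul_comm _ _
      simp only [Sum.elim_inl, Sum.elim_inr, Fintype.sum_unique, add_smul, mul_sub, mul_one,
        smul_sub, Finset.sum_add_distrib, Finset.sum_sub_distrib, ← Finset.smul_sum,
        ← Finset.sum_mul, hc]
      abel

namespace Aux

lemma step_iff_span {K A : Type*} [Field K] [CommRing A] [Algebra K A] (x : A) :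
    x ∈ StepSet K A ↔ x ∈ Submodule.span K {e : A | IsIdempotentElem e} := by
  rw [Submodule.mem_span_set']
  constructor
  · rintro ⟨n, l, e, he, rfl⟩
    exact ⟨n, l, fun k => ⟨e k, he k⟩, rfl⟩
  · rintro ⟨n, f, g, rfl⟩
    exact ⟨n, f, fun k => g k, fun k => (g k).2, rfl⟩

end Aux

set_option maxHeartbeats 1000000 in
/-- The set `K(∇)` of step elements is a von Neumann regular subalgebra of `A`
whose idempotents are exactly the idempotents `∇` of `A`. -/
theorem stmt_9 {K A : Type*} [Field K] [CommRing A] [Algebra K A]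
    (hreg : IsRegularRing A) :
    (1 : A) ∈ StepSet K A ∧
    (∀ x ∈ StepSet K A, ∀ y ∈ StepSet K A, x + y ∈ StepSet K A) ∧
    (∀ x ∈ StepSet K A, ∀ y ∈ StepSet K A, x * y ∈ StepSet K A) ∧
    (∀ (c : K), ∀ x ∈ StepSet K A, c • x ∈ StepSet K A) ∧
    -- idempotents of `K(∇)` are exactly `∇`
    (∀ e : A, IsIdempotentElem e → e ∈ StepSet K A) ∧
    -- `K(∇)` is von Neumann regular
    (∀ a ∈ StepSet K A, ∃ b ∈ StepSet K A, a * a * b = a) := by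
  refine ⟨⟨1, fun _ => 1, fun _ => 1, fun _ => IsIdempotentElem.one, by simp⟩, ?_, ?_, ?_, ?_, ?_⟩
  · intro x hx y hy
    rw [Aux.step_iff_span] at *
    exact Submodule.add_mem _ hx hy
  · -- multiplication
    rintro x ⟨n, l, e, he, rfl⟩ y ⟨m, s, g, hg, rfl⟩
    refine ⟨n * m, fun p => l (finProdFinEquiv.symm p).1 * s (finProdFinEquiv.symm p).2,
      fun p => e (finProdFinEquiv.symm p).1 * g (finProdFinEquiv.symm p).2,
      fun p => idem_mul (he _) (hg _), ?_⟩
    calc (∑ k, l k • e k) * (∑ j, s j • g j) = ∑ k, ∑ j, (l k * s j) • (e k * g j) := by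
          rw [Finset.sum_mul_sum]
          exact Finset.sum_congr rfl fun k _ => Finset.sum_congr rfl fun j _ =>
            smul_mul_smul' _ _ _ _
      _ = ∑ q : Fin n × Fin m, (l q.1 * s q.2) • (e q.1 * g q.2) :=
          (Fintype.sum_prod_type (f := fun q : Fin n × Fin m =>
            (l q.1 * s q.2) • (e q.1 * g q.2))).symm
      _ = _ := (Equiv.sum_comp finProdFinEquiv.symm
          (fun q : Fin n × Fin m => (l q.1 * s q.2) • (e q.1 * g q.2))).symm
  · intro c x hx
    rw [Aux.step_iff_span] at *
    exact Submodule.smul_mem _ _ hx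
  · intro e hee
    exact ⟨1, fun _ => 1, fun _ => e, fun _ => hee, by simp⟩
  · -- regularity
    rintro a ⟨n, l, e, he, rfl⟩
    obtain ⟨ι, hft, μ, f, hfid, hforth, hsum⟩ := orth_rep n l e he
    letI := hft
    rw [hsum]
    have hmul : ∀ c d : ι → K, (∑ i, c i • f i) * (∑ i, d i • f i)
        = ∑ i, (c i * d i) • f i := by
      intro c d
      rw [Finset.sum_mul_sum]
      refine Finset.sum_congr rfl fun i _ => ?_
      rw [Finset.sum_eq_single i (fun j _ hj => by
        rw [smul_mul_smul', hforth i j hj.symm, smul_zero]) (by simp)]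
      rw [smul_mul_smul', hfid i]
    refine ⟨∑ i, (μ i)⁻¹ • f i, ?_, ?_⟩
    · let eq := (Fintype.equivFin ι).symm
      exact ⟨Fintype.card ι, fun k => (μ (eq k))⁻¹, fun k => f (eq k),
        fun k => hfid _, (Equiv.sum_comp eq fun i => (μ i)⁻¹ • f i).symm⟩
    · rw [hmul, hmul]
      refine Finset.sum_congr rfl fun i _ => ?_
      by_cases h : μ i = 0
      · simp [h]
      · rw [mul_inv_cancel_right₀ h]


end LCRA
end

section
/- Let X be a regular module over a commutative unital regular ring A with complete Boolean algebra of idempotents. Then for every x ∈ X: (i) s(x)·x = x; (ii) if e is an idempotent with e·x = x then s(x) ≤ e; (iii) s(a·x) = s(a)·s(x) for every a ∈ A. -/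
namespace LCRA

section Support

variable {A X : Type*} [CommRing A] [AddCommGroup X] [Module A X]

variable (A) in
def idemAnnihilators (x : X) : Set A :=
  {e : A | IsIdempotentElem e ∧ e • x = 0}

theorem IsIdemSup.unique {m m' : A} {L : Set A} (h : IsIdemSup m L) (h' : IsIdemSup m' L) :
    m = m' :=
  calc m = m * m' := (h.2.2 m' h'.1 h'.2.1).symm
    _ = m' * m := mul_comm m m'
    _ = m' := h'.2.2 m h.1 h.2.1

variable {s : A} {x : X}

theorem isIdempotentElem_of_isIdemSup_one_sub {L : Set A} (hs : IsIdemSup (1 - s) L) :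
    IsIdempotentElem s :=
  IsIdempotentElem.one_sub_iff.mp hs.1

theorem IsRegularModule.one_sub_smul_eq_zero (hX : IsRegularModule A X)
    (hs : IsIdemSup (1 - s) (idemAnnihilators A x)) : (1 - s) • x = 0 :=
  hX x _ _ (fun _ he => he.1) hs (fun _ he => he.2)

theorem IsRegularModule.smul_eq_self (hX : IsRegularModule A X)
    (hs : IsIdemSup (1 - s) (idemAnnihilators A x)) : s • x = x := by
  have h := hX.one_sub_smul_eq_zero hs
  rwa [sub_smul, one_smul, sub_eq_zero, eq_comm] at h

theorem mul_eq_left_of_smul_eq_self (hs : IsIdemSup (1 - s) (idemAnnihilators A x)) {e : A}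
    (he : IsIdempotentElem e) (hex : e • x = x) : s * e = s := by
  have h := hs.2.1 (1 - e) ⟨he.one_sub, by rw [sub_smul, one_smul, hex, sub_self]⟩
  linear_combination h

theorem IsRegularModule.isIdemSup_idemAnnihilators_smul (hX : IsRegularModule A X)
    (hs : IsIdemSup (1 - s) (idemAnnihilators A x)) {a c : A} (hc : a * a * c = a) :
    IsIdemSup (1 - a * c * s) (idemAnnihilators A (a • x)) := by
  have hp : IsIdempotentElem (a * c) := by
    change a * c * (a * c) = a * c
    linear_combination c * hc
  have hsid := isIdempotentElem_of_isIdemSup_one_sub hs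
  refine ⟨(hp.mul hsid).one_sub, ?_, ?_⟩
  · rintro e ⟨he, hex⟩
    have hepx : (e * (a * c)) • x = 0 := by
      rw [show e * (a * c) = c * (e * a) by ring, mul_smul, mul_smul, hex, smul_zero]
    have h := hs.2.1 _ ⟨he.mul hp, hepx⟩
    linear_combination h
  · intro g hg hL
    have hA := hL (1 - a * c) ⟨hp.one_sub, by
      rw [← mul_smul, show (1 - a * c) * a = 0 by linear_combination -hc, zero_smul]⟩
    have hB := hL (1 - s) ⟨hs.1, by
      rw [smul_comm, hX.one_sub_smul_eq_zero hs, smul_zero]⟩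
    linear_combination a * c * hB + hA

end Support

theorem stmt_11_general {A X : Type*} [CommRing A] [AddCommGroup X] [Module A X]
    (i : A → A) (hi : ∀ a : A, a * a * i a = a ∧ a * i a * i a = i a)
    (hXreg : IsRegularModule A X)
    (x : X) (a : A) (sx sax : A)
    (hsx : IsIdemSup (1 - sx) {e : A | IsIdempotentElem e ∧ e • x = 0})
    (hsax : IsIdemSup (1 - sax) {e : A | IsIdempotentElem e ∧ e • (a • x) = 0}) :
    sx • x = x ∧
    (∀ e : A, IsIdempotentElem e → e • x = x → sx * e = sx) ∧
    sax = (a * i a) * sx := by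
  refine ⟨hXreg.smul_eq_self hsx, fun e he hex => mul_eq_left_of_smul_eq_self hsx he hex, ?_⟩
  have h := hsax.unique (hXreg.isIdemSup_idemAnnihilators_smul hsx (hi a).1)
  linear_combination -h

/-- Properties of the support of an element of a regular module:
`s(x) • x = x`; `s(x)` is below any idempotent fixing `x`; and
`s(a • x) = s(a) * s(x)`. Here `1 - s(x)` is the supremum of the idempotents
annihilating `x`, and `s(a) = a * i(a)`. -/
theorem stmt_11 {A X : Type*} [CommRing A] [AddCommGroup X] [Module A X]
    (hreg : IsRegularRing A) (hcomp : IdemComplete A)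
    (i : A → A) (hi : ∀ a : A, a * a * i a = a ∧ a * i a * i a = i a)
    (hXreg : IsRegularModule A X)
    (x : X) (a : A) (sx sax : A)
    (hsx : IsIdemSup (1 - sx) {e : A | IsIdempotentElem e ∧ e • x = 0})
    (hsax : IsIdemSup (1 - sax) {e : A | IsIdempotentElem e ∧ e • (a • x) = 0}) :
    sx • x = x ∧
    (∀ e : A, IsIdempotentElem e → e • x = x → sx * e = sx) ∧
    sax = (a * i a) * sx :=
  stmt_11_general i hi hXreg x a sx sax hsx hsax

end LCRA
end

section
/- If Y is an A-submodule of a laterally complete regular A-module X, then mix(Y) is a laterally complete A-submodule of X. -/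
namespace LCRA

section Aux

variable {A X : Type*} [CommRing A] [AddCommGroup X] [Module A X]

lemma zero_of_forall_mul_eq_zero (hreg : IsRegularRing A) {ι : Type} {e : ι → A}
    (hsup : IsIdemSup (1 : A) (Set.range e)) {a : A} (h : ∀ i, e i * a = 0) : a = 0 := by
  obtain ⟨c, hc⟩ := hreg a
  have hs : IsIdempotentElem (a * c) := by
    unfold IsIdempotentElem
    linear_combination c * hc
  have h1 : ∀ x ∈ Set.range e, x * (1 - a * c) = x := by
    rintro x ⟨i, rfl⟩
    linear_combination (-c) * h i
  have h2 := hsup.2.2 (1 - a * c) hs.one_sub h1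
  rw [one_mul] at h2
  have hac : a * c = 0 := by linear_combination -h2
  linear_combination -hc + a * hac

lemma trivialPartition : IsPartitionOfUnity (fun _ : Unit => (1 : A)) := by
  refine ⟨fun _ => IsIdempotentElem.one, fun i j hij => absurd (Subsingleton.elim i j) hij,
    IsIdempotentElem.one, ?_, ?_⟩
  · rintro x ⟨i, rfl⟩; exact mul_one 1
  · intro g hg h1
    have := h1 1 ⟨(), rfl⟩
    rw [one_mul] at this ⊢
    exact this

lemma mem_mixSet_of_mem {Y : Set X} {y : X} (hy : y ∈ Y) : y ∈ mixSet A Y :=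
  ⟨Unit, fun _ => (1 : A), fun _ => y, trivialPartition, fun _ => hy, fun _ => rfl⟩

lemma sigmaPartition (hreg : IsRegularRing A) {ι : Type} {e : ι → A}
    (he : IsPartitionOfUnity e) {κ : ι → Type} {f : ∀ i, κ i → A}
    (hf : ∀ i, IsPartitionOfUnity (f i)) :
    IsPartitionOfUnity (fun p : Σ i, κ i => e p.1 * f p.1 p.2) := by
  refine ⟨?_, ?_, IsIdempotentElem.one, ?_, ?_⟩
  · rintro ⟨i, j⟩
    have h1 := he.1 i
    have h2 := (hf i).1 j
    unfold IsIdempotentElem at *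
    dsimp only
    linear_combination (f i j * f i j) * h1 + (e i) * h2
  · rintro ⟨i, j⟩ ⟨i', j'⟩ hpq
    dsimp only
    by_cases hii : i = i'
    · subst hii
      have hjj : j ≠ j' := fun h => hpq (by rw [h])
      linear_combination (e i * e i) * (hf i).2.1 j j' hjj
    · linear_combination (f i j * f i' j') * he.2.1 i i' hii
  · rintro x ⟨p, rfl⟩; exact mul_one _
  · intro g hg h1
    have hk : ∀ i, e i * (1 - g) = 0 := by
      intro i
      have hj : ∀ j, f i j * (e i * (1 - g)) = 0 := by
        intro j
        have := h1 (e i * f i j) ⟨⟨i, j⟩, rfl⟩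
        linear_combination -this
      exact zero_of_forall_mul_eq_zero hreg (hf i).2.2 hj
    have := zero_of_forall_mul_eq_zero hreg he.2.2 hk
    linear_combination -this

end Aux

/-- If `Y` is an `A`-submodule of `X`, then `mix(Y)` is a laterally complete
`A`-submodule of `X`. -/
theorem stmt_14 {A X : Type*} [CommRing A] [AddCommGroup X] [Module A X]
    (hreg : IsRegularRing A) (hlat : RingLaterallyComplete A)
    (hXreg : IsRegularModule A X) (hXlat : ModuleLaterallyComplete A X)
    (Y : Submodule A X) :
    (0 : X) ∈ mixSet A (Y : Set X) ∧
    (∀ x ∈ mixSet A (Y : Set X), ∀ y ∈ mixSet A (Y : Set X),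
      x + y ∈ mixSet A (Y : Set X)) ∧
    (∀ a : A, ∀ x ∈ mixSet A (Y : Set X), a • x ∈ mixSet A (Y : Set X)) ∧
    -- `mix(Y)` is laterally complete
    (∀ (ι : Type) (e : ι → A) (ys : ι → X), IsPartitionOfUnity e →
      (∀ i, ys i ∈ mixSet A (Y : Set X)) →
      ∃ x ∈ mixSet A (Y : Set X), ∀ i, e i • x = e i • ys i) := by
  refine ⟨mem_mixSet_of_mem (Submodule.zero_mem Y), ?_, ?_, ?_⟩
  · rintro x ⟨ι₁, e, y, hpe, hyY, hxe⟩ z ⟨ι₂, f, w, hpf, hwY, hzf⟩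
    refine ⟨Σ _ : ι₁, ι₂, fun p => e p.1 * f p.2, fun p => y p.1 + w p.2,
      sigmaPartition hreg hpe (fun _ => hpf), fun p => Y.add_mem (hyY p.1) (hwY p.2), ?_⟩
    rintro ⟨i, j⟩
    dsimp only
    have h1 : (e i * f j) • x = (e i * f j) • y i := by
      rw [mul_comm, mul_smul, hxe i, ← mul_smul, mul_comm]
    have h2 : (e i * f j) • z = (e i * f j) • w j := by
      rw [mul_smul, hzf j, ← mul_smul]
    rw [smul_add, smul_add, h1, h2]
  · rintro a x ⟨ι₁, e, y, hpe, hyY, hxe⟩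
    refine ⟨ι₁, e, fun i => a • y i, hpe, fun i => Y.smul_mem a (hyY i), fun i => ?_⟩
    rw [smul_comm (e i) a x, smul_comm (e i) a (y i), hxe i]
  · intro ι e ys hpe hys
    choose κ f w hpf hwY hmix using hys
    obtain ⟨x, hx⟩ := hXlat ι e ys hpe
    refine ⟨x, ⟨Σ i, κ i, fun p => e p.1 * f p.1 p.2, fun p => w p.1 p.2,
      sigmaPartition hreg hpe hpf, fun p => hwY p.1 p.2, ?_⟩, hx⟩
    rintro ⟨i, j⟩
    dsimp only
    have h1 : (e i * f i j) • x = (e i * f i j) • ys i := by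
      rw [mul_comm, mul_smul, hx i, ← mul_smul, mul_comm]
    have h2 : (e i * f i j) • ys i = (e i * f i j) • w i j := by
      rw [mul_smul, hmix i j, ← mul_smul]
    rw [h1, h2]

end LCRA
end

section
/- Let X be a laterally complete regular A-module and let Y = {x_1, …, x_k} be a finite A-linearly independent subset of X. Then the A-linear span Lin(Y, A) is cyclic, i.e. mix(Lin(Y, A)) = Lin(Y, A). -/
namespace LCRA
/-- For a finite `A`-linearly independent set `Y`, the `A`-linear span of `Y`
is cyclic: `mix(Lin(Y, A)) = Lin(Y, A)`. -/
theorem stmt_15 {A X : Type*} [CommRing A] [AddCommGroup X] [Module A X]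
    (hreg : IsRegularRing A) (hlat : RingLaterallyComplete A)
    (hXreg : IsRegularModule A X) (hXlat : ModuleLaterallyComplete A X)
    {k : ℕ} (x : Fin k → X) (hind : LinearIndependent A x) :
    mixSet A (Submodule.span A (Set.range x) : Set X)
      = (Submodule.span A (Set.range x) : Set X) := by
  apply Set.eq_of_subset_of_subset
  · rintro x' ⟨ι, e, y, ⟨hidem, hdisj, hsup1⟩, hyE, hmix⟩
    have hco : ∀ i, ∃ a : Fin k → A, ∑ j, a j • x j = y i := fun i =>
      (Submodule.mem_span_range_iff_exists_fun A).mp (hyE i)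
    choose a ha using hco
    have hqi : ∀ i j, ∃ c, (e i * a i j) * (e i * a i j) * c = e i * a i j :=
      fun i j => hreg (e i * a i j)
    choose c hc using hqi
    -- supports s i j = e i * a i j * c i j
    have hsidem : ∀ i j, IsIdempotentElem (e i * a i j * c i j) := by
      intro i j
      unfold IsIdempotentElem
      linear_combination (c i j) * hc i j
    have hse : ∀ i j, e i * (e i * a i j * c i j) = e i * a i j * c i j := by
      intro i j
      linear_combination (a i j * c i j) * (hidem i).eq
    -- b j from ring lateral completeness
    have hbex : ∀ j, ∃ b : A, ∀ i, ∀ cc : A,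
        (e i * a i j) * (e i * a i j) * cc = e i * a i j →
        b * ((e i * a i j) * cc) = e i * a i j := by
      intro j
      refine hlat.2 ι (fun i => e i * a i j) ?_
      intro i i' h
      linear_combination (a i j * a i' j) * hdisj i i' h
    choose b hb using hbex
    have hbs : ∀ i j, b j * (e i * a i j * c i j) = e i * a i j := by
      intro i j
      have := hb j i (c i j) (hc i j)
      linear_combination this
    -- m j : sup of supports
    have hmex : ∀ j, ∃ m, IsIdemSup m (Set.range (fun i => e i * a i j * c i j)) := by
      intro j
      refine hlat.1 _ ?_
      rintro _ ⟨i, rfl⟩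
      exact hsidem i j
    choose m hm using hmex
    have hsm : ∀ i j, (e i * a i j * c i j) * m j = e i * a i j * c i j :=
      fun i j => (hm j).2.1 _ ⟨i, rfl⟩
    -- key: e i * m j = s i j
    have hem : ∀ i j, e i * m j = e i * a i j * c i j := by
      intro i j
      have hg : IsIdempotentElem (e i * a i j * c i j + (1 - e i) * m j) := by
        unfold IsIdempotentElem
        linear_combination (hsidem i j).eq - 2 * (m j) * (hse i j)
          + (1 - e i) * ((hm j).1).eq + (m j)^2 * (hidem i).eq
      have hfor : ∀ t ∈ Set.range (fun i' => e i' * a i' j * c i' j),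
          t * (e i * a i j * c i j + (1 - e i) * m j) = t := by
        rintro _ ⟨i', rfl⟩
        by_cases h : i' = i
        · subst h
          linear_combination (hsidem i' j).eq - (m j) * (hse i' j)
        · have hd : e i' * e i = 0 := hdisj i' i h
          have hd2 : (e i' * a i' j * c i' j) * (e i * a i j * c i j) = 0 := by
            linear_combination (a i' j * c i' j * a i j * c i j) * hd
          linear_combination hd2 + hsm i' j - (m j) * (a i' j * c i' j) * hd
      have hmg := (hm j).2.2 _ hg hfor
      linear_combination (-1 : A) * hmg + (1 - e i) * ((hm j).1).eq + hsm i j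
    have key : ∀ i j, e i * (b j * m j) = e i * a i j := by
      intro i j
      linear_combination (b j) * (hem i j) + hbs i j
    -- conclude
    have hz : ∀ i, e i • (x' - ∑ j, (b j * m j) • x j) = 0 := by
      intro i
      have h1 : e i • x' = ∑ j, (e i * a i j) • x j := by
        rw [hmix i, ← ha i, Finset.smul_sum]
        simp [smul_smul]
      rw [smul_sub, h1, Finset.smul_sum, ← Finset.sum_sub_distrib]
      apply Finset.sum_eq_zero
      intro j _
      rw [smul_smul, key i j, sub_self]
    have h1z : (1 : A) • (x' - ∑ j, (b j * m j) • x j) = 0 := by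
      refine hXreg _ (Set.range e) 1 ?_ hsup1 ?_
      · rintro _ ⟨i, rfl⟩; exact hidem i
      · rintro _ ⟨i, rfl⟩; exact hz i
    rw [one_smul, sub_eq_zero] at h1z
    rw [h1z]
    exact Submodule.sum_mem _ fun j _ =>
      Submodule.smul_mem _ _ (Submodule.subset_span ⟨j, rfl⟩)
  · intro x' hx'
    refine ⟨PUnit, fun _ => 1, fun _ => x', ⟨fun _ => IsIdempotentElem.one,
      fun i j h => absurd (Subsingleton.elim i j) h,
      IsIdempotentElem.one, fun t _ => mul_one t, fun g hg hgle => ?_⟩,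
      fun _ => hx', fun _ => rfl⟩
    simpa using hgle 1 ⟨PUnit.unit, rfl⟩


end LCRA
end
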